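/- In an ε-space (ℝⁿ, g_ε), the coordinate vector field ∂_n is a parallel null vector field, and the curvature tensor is parallel (the space is locally symmetric): ∇R = 0. -/
import Mathlib


noncomputable section

/-- Partial derivative of a function on `ℝⁿ` in the `a`-th coordinate direction. -/
def pd {N : ℕ} (a : Fin N) (h : (Fin N → ℝ) → ℝ) (x : Fin N → ℝ) : ℝ :=
  deriv (fun t => h (Function.update x a t)) (x a)

/-- The index of the coordinate `x_n` (dimension `n = m+3`). -/
def lastIdx (m : ℕ) : Fin (m + 3) := ⟨m + 2, by omega⟩

/-- The index of the coordinate `x_{n-1}`. -/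
def penIdx (m : ℕ) : Fin (m + 3) := ⟨m + 1, by omega⟩

/-- The ε-metric `g_ε = Σ_{i=1}^{n-2} (dx_i)² - dx_{n-1} dx_n + ε(Σ x_i²)(dx_{n-1})²`. -/
def gEps (m : ℕ) (ε : ℝ) (x : Fin (m + 3) → ℝ) (i j : Fin (m + 3)) : ℝ :=
  if i = j ∧ (i : ℕ) < m + 1 then 1
  else if i = penIdx m ∧ j = penIdx m then
    ε * ∑ k : Fin (m + 3), (if (k : ℕ) < m + 1 then (x k) ^ 2 else 0)
  else if (i = penIdx m ∧ j = lastIdx m) ∨ (i = lastIdx m ∧ j = penIdx m) then -(1 / 2)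
  else 0

/-- Christoffel symbols of the ε-metric: `∇_{∂_i}∂_{n-1} = -2εx_i ∂_n` for spatial `i`,
`∇_{∂_{n-1}}∂_{n-1} = -ε Σ_k x_k ∂_k`, all others zero. -/
def ΓEps (m : ℕ) (ε : ℝ) (x : Fin (m + 3) → ℝ) (k i j : Fin (m + 3)) : ℝ :=
  if (i : ℕ) < m + 1 ∧ j = penIdx m ∧ k = lastIdx m then -(2 * ε * x i)
  else if (j : ℕ) < m + 1 ∧ i = penIdx m ∧ k = lastIdx m then -(2 * ε * x j)
  else if i = penIdx m ∧ j = penIdx m ∧ (k : ℕ) < m + 1 then -(ε * x k)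
  else 0

/-- Component on `∂_l` of `R(∂_i,∂_j)∂_k`, convention `R(X,Y) = ∇_{[X,Y]} - [∇_X, ∇_Y]`. -/
def RopEps (m : ℕ) (ε : ℝ) (x : Fin (m + 3) → ℝ) (i j k l : Fin (m + 3)) : ℝ :=
  -(pd i (fun y => ΓEps m ε y l j k) x - pd j (fun y => ΓEps m ε y l i k) x
    + ∑ s, (ΓEps m ε x l i s * ΓEps m ε x s j k - ΓEps m ε x l j s * ΓEps m ε x s i k))

/-- The (0,4)-curvature tensor of the ε-metric. -/
def R4Eps (m : ℕ) (ε : ℝ) (x : Fin (m + 3) → ℝ) (i j k h : Fin (m + 3)) : ℝ :=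
  ∑ l, RopEps m ε x i j k l * gEps m ε x l h

/-- Ricci tensor `Ric(X,Y) = trace (Z ↦ R(X,Z)Y)` of the ε-metric. -/
def RicEps (m : ℕ) (ε : ℝ) (x : Fin (m + 3) → ℝ) (i j : Fin (m + 3)) : ℝ :=
  ∑ k, RopEps m ε x i k j k

/-- Covariant derivative `(∇_{∂_a} R)(∂_i,∂_j,∂_k,∂_h)` of the (0,4)-curvature tensor. -/
def covR4Eps (m : ℕ) (ε : ℝ) (x : Fin (m + 3) → ℝ) (a i j k h : Fin (m + 3)) : ℝ :=
  pd a (fun y => R4Eps m ε y i j k h) x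
    - ∑ s, (ΓEps m ε x s a i * R4Eps m ε x s j k h + ΓEps m ε x s a j * R4Eps m ε x i s k h
      + ΓEps m ε x s a k * R4Eps m ε x i j s h + ΓEps m ε x s a h * R4Eps m ε x i j k s)

/-- The matrix of the curvature operator `R(u,v)` in the coordinate frame. -/
def RMatEps (m : ℕ) (ε : ℝ) (x : Fin (m + 3) → ℝ) (u v : Fin (m + 3) → ℝ) :
    Matrix (Fin (m + 3)) (Fin (m + 3)) ℝ :=
  Matrix.of fun l k => ∑ i, ∑ j, u i * v j * RopEps m ε x i j k l

/-- The inner product of tangent vectors with respect to the ε-metric. -/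
def gdotEps (m : ℕ) (ε : ℝ) (x : Fin (m + 3) → ℝ) (u v : Fin (m + 3) → ℝ) : ℝ :=
  ∑ i, ∑ j, gEps m ε x i j * u i * v j

/-! ### Auxiliary machinery -/

lemma pen_val (m : ℕ) : ((penIdx m : Fin (m+3)) : ℕ) = m + 1 := rfl
lemma last_val (m : ℕ) : ((lastIdx m : Fin (m+3)) : ℕ) = m + 2 := rfl

lemma idx_cases {m : ℕ} (p : Fin (m+3)) :
    (p : ℕ) < m + 1 ∨ p = penIdx m ∨ p = lastIdx m := by
  rcases p with ⟨v, hv⟩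
  simp only [ne_eq, Fin.ext_iff, pen_val, last_val]
  omega

/-- Coefficient of the (linear-in-`x`) Christoffel symbol. -/
def Gcoef (m : ℕ) (ε : ℝ) (k i j : Fin (m+3)) : ℝ :=
  if (i : ℕ) < m + 1 ∧ j = penIdx m ∧ k = lastIdx m then -(2 * ε)
  else if (j : ℕ) < m + 1 ∧ i = penIdx m ∧ k = lastIdx m then -(2 * ε)
  else if i = penIdx m ∧ j = penIdx m ∧ (k : ℕ) < m + 1 then -ε
  else 0

/-- The coordinate on which the Christoffel symbol depends. -/
def Gvar (m : ℕ) (k i j : Fin (m+3)) : Fin (m+3) :=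
  if (i : ℕ) < m + 1 ∧ j = penIdx m ∧ k = lastIdx m then i
  else if (j : ℕ) < m + 1 ∧ i = penIdx m ∧ k = lastIdx m then j
  else if i = penIdx m ∧ j = penIdx m ∧ (k : ℕ) < m + 1 then k
  else lastIdx m

lemma Gam_eq (m : ℕ) (ε : ℝ) (x : Fin (m+3) → ℝ) (k i j : Fin (m+3)) :
    ΓEps m ε x k i j = Gcoef m ε k i j * x (Gvar m k i j) := by
  unfold ΓEps Gcoef Gvar
  split_ifs <;> ring

lemma pd_const_mul {N : ℕ} (a p : Fin N) (c : ℝ) (x : Fin N → ℝ) :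
    pd a (fun y => c * y p) x = if a = p then c else 0 := by
  unfold pd
  simp only [Function.update_apply]
  by_cases h : p = a
  · subst h
    have := ((hasDerivAt_id (x p)).const_mul c).deriv
    simpa using this
  · simp [h, Ne.symm h]

lemma pd_Gam (m : ℕ) (ε : ℝ) (x : Fin (m+3) → ℝ) (a l i j : Fin (m+3)) :
    pd a (fun y => ΓEps m ε y l i j) x = if a = Gvar m l i j then Gcoef m ε l i j else 0 := by
  have : (fun y : Fin (m+3) → ℝ => ΓEps m ε y l i j)
      = fun y => Gcoef m ε l i j * y (Gvar m l i j) := funext fun y => Gam_eq m ε y l i j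
  rw [this, pd_const_mul]

set_option maxHeartbeats 4000000 in
lemma quad_cancel (m : ℕ) (ε : ℝ) (x : Fin (m+3) → ℝ) (l i j k s : Fin (m+3)) :
    ΓEps m ε x l i s * ΓEps m ε x s j k = ΓEps m ε x l j s * ΓEps m ε x s i k := by
  unfold ΓEps
  split_ifs <;>
    first
      | ring1
      | (exfalso; simp only [Fin.ext_iff, pen_val, last_val, and_true, true_and,
            or_true, true_or, and_false, false_and, or_false, false_or, not_true,
            not_false_iff] at *;
          all_goals (have hp := pen_val m; have hl := last_val m; omega))

/-- The constant value of the curvature operator components. -/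
def RopC (m : ℕ) (ε : ℝ) (i j k l : Fin (m+3)) : ℝ :=
  (if j = Gvar m l i k then Gcoef m ε l i k else 0)
    - (if i = Gvar m l j k then Gcoef m ε l j k else 0)

lemma Rop_eq (m : ℕ) (ε : ℝ) (x : Fin (m+3) → ℝ) (i j k l : Fin (m+3)) :
    RopEps m ε x i j k l = RopC m ε i j k l := by
  unfold RopEps RopC
  rw [pd_Gam, pd_Gam, Finset.sum_eq_zero (fun s _ => by rw [quad_cancel, sub_self])]
  ring

/-- The constant (0,4) curvature tensor of the ε-metric. -/
def R4c (m : ℕ) (ε : ℝ) (i j k h : Fin (m+3)) : ℝ :=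
  if (i : ℕ) < m + 1 ∧ j = penIdx m ∧ k = i ∧ h = penIdx m then -ε
  else if i = penIdx m ∧ (j : ℕ) < m + 1 ∧ k = j ∧ h = penIdx m then ε
  else if (i : ℕ) < m + 1 ∧ j = penIdx m ∧ k = penIdx m ∧ h = i then ε
  else if i = penIdx m ∧ (j : ℕ) < m + 1 ∧ k = penIdx m ∧ h = j then -ε
  else 0

set_option maxHeartbeats 4000000 in
lemma RopC_pen (m : ℕ) (ε : ℝ) (i j k : Fin (m+3)) :
    RopC m ε i j k (penIdx m) = 0 := by
  unfold RopC Gcoef Gvar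
  split_ifs <;>
    first
      | ring1
      | (exfalso; simp only [Fin.ext_iff, pen_val, last_val, and_true, true_and,
            or_true, true_or, and_false, false_and, or_false, false_or, not_true,
            not_false_iff] at *;
          all_goals (have hp := pen_val m; have hl := last_val m; omega))

set_option maxHeartbeats 4000000 in
lemma RopC_spatial (m : ℕ) (ε : ℝ) (i j k h : Fin (m+3)) (hh : (h : ℕ) < m + 1) :
    RopC m ε i j k h = R4c m ε i j k h := by
  unfold RopC Gcoef Gvar R4c
  split_ifs <;>
    first
      | ring1
      | (exfalso; simp only [Fin.ext_iff, pen_val, last_val, and_true, true_and,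
            or_true, true_or, and_false, false_and, or_false, false_or, not_true,
            not_false_iff] at *;
          all_goals (have hp := pen_val m; have hl := last_val m; omega))

set_option maxHeartbeats 4000000 in
lemma RopC_last (m : ℕ) (ε : ℝ) (i j k : Fin (m+3)) :
    RopC m ε i j k (lastIdx m) * (-(1/2)) = R4c m ε i j k (penIdx m) := by
  unfold RopC Gcoef Gvar R4c
  split_ifs <;>
    first
      | ring1
      | (exfalso; simp only [Fin.ext_iff, pen_val, last_val, and_true, true_and,
            or_true, true_or, and_false, false_and, or_false, false_or, not_true,
            not_false_iff] at *;
          all_goals (have hp := pen_val m; have hl := last_val m; omega))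

lemma R4c_last4 (m : ℕ) (ε : ℝ) (i j k : Fin (m+3)) :
    R4c m ε i j k (lastIdx m) = 0 := by
  unfold R4c
  split_ifs <;>
    first
      | ring1
      | (exfalso; simp only [Fin.ext_iff, pen_val, last_val, and_true, true_and,
            or_true, true_or, and_false, false_and, or_false, false_or, not_true,
            not_false_iff] at *;
          all_goals (have hp := pen_val m; have hl := last_val m; omega))

lemma R4c_last1 (m : ℕ) (ε : ℝ) (j k h : Fin (m+3)) :
    R4c m ε (lastIdx m) j k h = 0 := by
  unfold R4c
  split_ifs <;>
    first
      | ring1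
      | (exfalso; simp only [Fin.ext_iff, pen_val, last_val, and_true, true_and,
            or_true, true_or, and_false, false_and, or_false, false_or, not_true,
            not_false_iff] at *;
          all_goals (have hp := pen_val m; have hl := last_val m; omega))

lemma R4c_last2 (m : ℕ) (ε : ℝ) (i k h : Fin (m+3)) :
    R4c m ε i (lastIdx m) k h = 0 := by
  unfold R4c
  split_ifs <;>
    first
      | ring1
      | (exfalso; simp only [Fin.ext_iff, pen_val, last_val, and_true, true_and,
            or_true, true_or, and_false, false_and, or_false, false_or, not_true,
            not_false_iff] at *;
          all_goals (have hp := pen_val m; have hl := last_val m; omega))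

lemma R4c_last3 (m : ℕ) (ε : ℝ) (i j h : Fin (m+3)) :
    R4c m ε i j (lastIdx m) h = 0 := by
  unfold R4c
  split_ifs <;>
    first
      | ring1
      | (exfalso; simp only [Fin.ext_iff, pen_val, last_val, and_true, true_and,
            or_true, true_or, and_false, false_and, or_false, false_or, not_true,
            not_false_iff] at *;
          all_goals (have hp := pen_val m; have hl := last_val m; omega))

/-! ### Metric lemmas -/

lemma g_spatial (m : ℕ) (ε : ℝ) (x : Fin (m+3) → ℝ) (l h : Fin (m+3)) (hh : (h : ℕ) < m + 1) :
    gEps m ε x l h = if l = h then 1 else 0 := by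
  unfold gEps
  split_ifs <;>
    first
      | rfl
      | (exfalso; simp only [Fin.ext_iff, pen_val, last_val, and_true, true_and,
            or_true, true_or, and_false, false_and, or_false, false_or, not_true,
            not_false_iff] at *;
          all_goals (have hp := pen_val m; have hl := last_val m; omega))

lemma g_pen (m : ℕ) (ε : ℝ) (x : Fin (m+3) → ℝ) (l : Fin (m+3)) :
    gEps m ε x l (penIdx m)
      = (if l = penIdx m then ε * ∑ k : Fin (m + 3), (if (k : ℕ) < m + 1 then (x k) ^ 2 else 0)
          else 0)
        + (if l = lastIdx m then -(1/2) else 0) := by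
  unfold gEps
  split_ifs <;>
    first
      | ring1
      | (exfalso; simp only [Fin.ext_iff, pen_val, last_val, and_true, true_and,
            or_true, true_or, and_false, false_and, or_false, false_or, not_true,
            not_false_iff] at *;
          all_goals (have hp := pen_val m; have hl := last_val m; omega))

lemma g_last (m : ℕ) (ε : ℝ) (x : Fin (m+3) → ℝ) (l : Fin (m+3)) :
    gEps m ε x l (lastIdx m) = if l = penIdx m then -(1/2) else 0 := by
  unfold gEps
  split_ifs <;>
    first
      | ring1
      | (exfalso; simp only [Fin.ext_iff, pen_val, last_val, and_true, true_and,
            or_true, true_or, and_false, false_and, or_false, false_or, not_true,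
            not_false_iff] at *;
          all_goals (have hp := pen_val m; have hl := last_val m; omega))

/-! ### The curvature tensor is the constant tensor `R4c` -/

lemma R4_eq (m : ℕ) (ε : ℝ) (x : Fin (m+3) → ℝ) (i j k h : Fin (m+3)) :
    R4Eps m ε x i j k h = R4c m ε i j k h := by
  unfold R4Eps
  simp only [Rop_eq]
  rcases idx_cases h with hh | hh | hh
  · have : ∀ l : Fin (m+3), RopC m ε i j k l * gEps m ε x l h
        = if l = h then RopC m ε i j k l else 0 := by
      intro l
      rw [g_spatial m ε x l h hh]
      split_ifs <;> simp
    rw [Finset.sum_congr rfl fun l _ => this l, Finset.sum_ite_eq' Finset.univ h]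
    simp [RopC_spatial m ε i j k h hh]
  · subst hh
    have : ∀ l : Fin (m+3), RopC m ε i j k l * gEps m ε x l (penIdx m)
        = (if l = penIdx m then
            RopC m ε i j k l * (ε * ∑ t : Fin (m + 3), (if (t : ℕ) < m + 1 then (x t) ^ 2 else 0))
           else 0)
          + (if l = lastIdx m then RopC m ε i j k l * (-(1/2)) else 0) := by
      intro l
      rw [g_pen]
      split_ifs <;> ring
    rw [Finset.sum_congr rfl fun l _ => this l, Finset.sum_add_distrib,
      Finset.sum_ite_eq' Finset.univ (penIdx m), Finset.sum_ite_eq' Finset.univ (lastIdx m)]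
    simp only [Finset.mem_univ, if_true, RopC_pen, zero_mul, zero_add]
    exact RopC_last m ε i j k
  · subst hh
    have : ∀ l : Fin (m+3), RopC m ε i j k l * gEps m ε x l (lastIdx m)
        = if l = penIdx m then RopC m ε i j k l * (-(1/2)) else 0 := by
      intro l
      rw [g_last]
      split_ifs <;> ring
    rw [Finset.sum_congr rfl fun l _ => this l, Finset.sum_ite_eq' Finset.univ (penIdx m)]
    simp [RopC_pen, R4c_last4]

/-! ### Christoffel symbol helper lemmas -/

lemma Γ_last_j (m : ℕ) (ε : ℝ) (x : Fin (m+3) → ℝ) (k i : Fin (m+3)) :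
    ΓEps m ε x k i (lastIdx m) = 0 := by
  unfold ΓEps
  split_ifs <;>
    first
      | rfl
      | (exfalso; simp only [Fin.ext_iff, pen_val, last_val, and_true, true_and,
            or_true, true_or, and_false, false_and, or_false, false_or, not_true,
            not_false_iff] at *;
          all_goals (have hp := pen_val m; have hl := last_val m; omega))

lemma Γ_a_spatial_ne (m : ℕ) (ε : ℝ) (x : Fin (m+3) → ℝ) {a s : Fin (m+3)}
    (ha : (a : ℕ) < m + 1) (hs : s ≠ lastIdx m) (t : Fin (m+3)) :
    ΓEps m ε x s a t = 0 := by
  unfold ΓEps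
  split_ifs <;>
    first
      | rfl
      | (exfalso; simp only [Fin.ext_iff, pen_val, last_val, and_true, true_and,
            or_true, true_or, and_false, false_and, or_false, false_or, not_true,
            not_false_iff] at *;
          all_goals (have hp := pen_val m; have hl := last_val m; omega))

lemma Γ_a_last (m : ℕ) (ε : ℝ) (x : Fin (m+3) → ℝ) (s t : Fin (m+3)) :
    ΓEps m ε x s (lastIdx m) t = 0 := by
  unfold ΓEps
  split_ifs <;>
    first
      | rfl
      | (exfalso; simp only [Fin.ext_iff, pen_val, last_val, and_true, true_and,
            or_true, true_or, and_false, false_and, or_false, false_or, not_true,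
            not_false_iff] at *;
          all_goals (have hp := pen_val m; have hl := last_val m; omega))

lemma Γ_pen_pen (m : ℕ) (ε : ℝ) (x : Fin (m+3) → ℝ) (t : Fin (m+3)) :
    ΓEps m ε x (penIdx m) (penIdx m) t = 0 := by
  unfold ΓEps
  split_ifs <;>
    first
      | rfl
      | (exfalso; simp only [Fin.ext_iff, pen_val, last_val, and_true, true_and,
            or_true, true_or, and_false, false_and, or_false, false_or, not_true,
            not_false_iff] at *;
          all_goals (have hp := pen_val m; have hl := last_val m; omega))

lemma Γ_pen_spatial (m : ℕ) (ε : ℝ) (x : Fin (m+3) → ℝ) {s : Fin (m+3)}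
    (hs : (s : ℕ) < m + 1) (t : Fin (m+3)) :
    ΓEps m ε x s (penIdx m) t = if t = penIdx m then -(ε * x s) else 0 := by
  unfold ΓEps
  split_ifs <;>
    first
      | rfl
      | (exfalso; simp only [Fin.ext_iff, pen_val, last_val, and_true, true_and,
            or_true, true_or, and_false, false_and, or_false, false_or, not_true,
            not_false_iff] at *;
          all_goals (have hp := pen_val m; have hl := last_val m; omega))

lemma R4c_nopen12 (m : ℕ) (ε : ℝ) {i j : Fin (m+3)} (k h : Fin (m+3))
    (h1 : i ≠ penIdx m) (h2 : j ≠ penIdx m) : R4c m ε i j k h = 0 := by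
  unfold R4c
  split_ifs <;>
    first
      | ring1
      | (exfalso; simp only [Fin.ext_iff, pen_val, last_val, and_true, true_and,
            or_true, true_or, and_false, false_and, or_false, false_or, not_true,
            not_false_iff] at *;
          all_goals (have hp := pen_val m; have hl := last_val m; omega))

lemma R4c_nopen34 (m : ℕ) (ε : ℝ) (i j : Fin (m+3)) {k h : Fin (m+3)}
    (h1 : k ≠ penIdx m) (h2 : h ≠ penIdx m) : R4c m ε i j k h = 0 := by
  unfold R4c
  split_ifs <;>
    first
      | ring1
      | (exfalso; simp only [Fin.ext_iff, pen_val, last_val, and_true, true_and,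
            or_true, true_or, and_false, false_and, or_false, false_or, not_true,
            not_false_iff] at *;
          all_goals (have hp := pen_val m; have hl := last_val m; omega))

set_option maxHeartbeats 2000000 in
lemma R4c_antisym12 (m : ℕ) (ε : ℝ) (p q k h : Fin (m+3)) :
    R4c m ε p q k h + R4c m ε q p k h = 0 := by
  unfold R4c
  split_ifs <;>
    first
      | ring1
      | (exfalso; simp only [Fin.ext_iff, pen_val, last_val, and_true, true_and,
            or_true, true_or, and_false, false_and, or_false, false_or, not_true,
            not_false_iff] at *;
          all_goals (have hp := pen_val m; have hl := last_val m; omega))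

set_option maxHeartbeats 2000000 in
lemma R4c_antisym34 (m : ℕ) (ε : ℝ) (i j p q : Fin (m+3)) :
    R4c m ε i j p q + R4c m ε i j q p = 0 := by
  unfold R4c
  split_ifs <;>
    first
      | ring1
      | (exfalso; simp only [Fin.ext_iff, pen_val, last_val, and_true, true_and,
            or_true, true_or, and_false, false_and, or_false, false_or, not_true,
            not_false_iff] at *;
          all_goals (have hp := pen_val m; have hl := last_val m; omega))

lemma bracketA (m : ℕ) (ε : ℝ) (c : ℝ) (i j k h s : Fin (m+3)) (hs : s ≠ penIdx m) :
    (if i = penIdx m then c else 0) * R4c m ε s j k h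
      + (if j = penIdx m then c else 0) * R4c m ε i s k h = 0 := by
  by_cases hi : i = penIdx m <;> by_cases hj : j = penIdx m
  · rw [if_pos hi, if_pos hj, hi, hj]
    have hL := R4c_antisym12 m ε s (penIdx m) k h
    linear_combination c * hL
  · rw [if_pos hi, if_neg hj, R4c_nopen12 m ε k h hs hj]
    ring
  · rw [if_neg hi, if_pos hj, R4c_nopen12 m ε k h hi hs]
    ring
  · rw [if_neg hi, if_neg hj]
    ring

lemma bracketB (m : ℕ) (ε : ℝ) (c : ℝ) (i j k h s : Fin (m+3)) (hs : s ≠ penIdx m) :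
    (if k = penIdx m then c else 0) * R4c m ε i j s h
      + (if h = penIdx m then c else 0) * R4c m ε i j k s = 0 := by
  by_cases hk : k = penIdx m <;> by_cases hh : h = penIdx m
  · rw [if_pos hk, if_pos hh, hk, hh]
    have hL := R4c_antisym34 m ε i j s (penIdx m)
    linear_combination c * hL
  · rw [if_pos hk, if_neg hh, R4c_nopen34 m ε i j hs hh]
    ring
  · rw [if_neg hk, if_pos hh, R4c_nopen34 m ε i j hk hs]
    ring
  · rw [if_neg hk, if_neg hh]
    ring

lemma bracket (m : ℕ) (ε : ℝ) (c : ℝ) (i j k h s : Fin (m+3)) (hs : s ≠ penIdx m) :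
    (if i = penIdx m then c else 0) * R4c m ε s j k h
      + (if j = penIdx m then c else 0) * R4c m ε i s k h
      + (if k = penIdx m then c else 0) * R4c m ε i j s h
      + (if h = penIdx m then c else 0) * R4c m ε i j k s = 0 := by
  have hA := bracketA m ε c i j k h s hs
  have hB := bracketB m ε c i j k h s hs
  linear_combination hA + hB

/-! ### The covariant derivative of the curvature vanishes termwise -/

lemma term_zero (m : ℕ) (ε : ℝ) (x : Fin (m+3) → ℝ) (a i j k h s : Fin (m+3)) :
    ΓEps m ε x s a i * R4c m ε s j k h + ΓEps m ε x s a j * R4c m ε i s k h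
      + ΓEps m ε x s a k * R4c m ε i j s h + ΓEps m ε x s a h * R4c m ε i j k s = 0 := by
  rcases idx_cases a with ha | ha | ha
  · -- `a` spatial
    rcases eq_or_ne s (lastIdx m) with hs | hs
    · subst hs
      rw [R4c_last1, R4c_last2, R4c_last3, R4c_last4]
      ring
    · rw [Γ_a_spatial_ne m ε x ha hs, Γ_a_spatial_ne m ε x ha hs,
        Γ_a_spatial_ne m ε x ha hs, Γ_a_spatial_ne m ε x ha hs]
      ring
  · -- `a = penIdx`
    subst ha
    rcases idx_cases s with hs | hs | hs
    · rw [Γ_pen_spatial m ε x hs, Γ_pen_spatial m ε x hs, Γ_pen_spatial m ε x hs,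
        Γ_pen_spatial m ε x hs]
      have hs' : s ≠ penIdx m := by
        simp only [ne_eq, Fin.ext_iff, pen_val]
        omega
      have hb := bracket m ε (-(ε * x s)) i j k h s hs'
      linear_combination hb
    · subst hs
      rw [Γ_pen_pen, Γ_pen_pen, Γ_pen_pen, Γ_pen_pen]
      ring
    · subst hs
      rw [R4c_last1, R4c_last2, R4c_last3, R4c_last4]
      ring
  · -- `a = lastIdx`
    subst ha
    rw [Γ_a_last, Γ_a_last, Γ_a_last, Γ_a_last]
    ring

lemma pd_R4 (m : ℕ) (ε : ℝ) (x : Fin (m+3) → ℝ) (a i j k h : Fin (m+3)) :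
    pd a (fun y => R4Eps m ε y i j k h) x = 0 := by
  unfold pd
  simp only [R4_eq]
  exact deriv_const _ _

/-- in an ε-space, `∂_n` is a parallel null vector field, and the curvature
tensor is parallel: `∇R = 0` (the space is locally symmetric). -/
theorem eps_parallel_null_and_locally_symmetric (m : ℕ) (ε : ℝ) (hε : ε = 1 ∨ ε = -1) :
    ∀ x : Fin (m + 3) → ℝ,
      (∀ i k : Fin (m + 3), ΓEps m ε x k i (lastIdx m) = 0) ∧
      gEps m ε x (lastIdx m) (lastIdx m) = 0 ∧
      (∀ a i j k h : Fin (m + 3), covR4Eps m ε x a i j k h = 0) := by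
  intro x
  refine ⟨fun i k => Γ_last_j m ε x k i, ?_, ?_⟩
  · rw [g_last]
    have hne : lastIdx m ≠ penIdx m := by
      simp only [ne_eq, Fin.ext_iff, pen_val, last_val]
      omega
    rw [if_neg hne]
  · intro a i j k h
    unfold covR4Eps
    rw [pd_R4, Finset.sum_eq_zero]
    · ring
    · intro s _
      simp only [R4_eq]
      exact term_zero m ε x a i j k h s
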